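/- Let K be a number field of degree d and fix integers n, m ≥ 1 and a Euclidean norm ‖·‖ on M_{n×m}(K_ℝ). There exists a constant c > 0, depending on K, the norm, n, m but independent of k and of the prime ideal P, such that: whenever x ∈ M_{n×m}(O_K) has rank(x) = k ≥ 1 over K and P is a prime ideal of O_K such that the reduction of x modulo P has rank strictly less than k over k_P, then ‖x‖ ≥ c·N(P)^{1/(k·d)}. -/

import Mathlib

noncomputable section
open NumberField NumberField.InfinitePlace MeasureTheory Module Submodule Matrix
attribute [local instance] Classical.propDecidable
set_option synthInstance.maxHeartbeats 1000000
set_option maxHeartbeats 1000000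

/-! Setup: the space `K_ℝ = K ⊗ ℝ`, realized as the mixed space `ℝ^{r₁} × ℂ^{r₂}`, together
with the Euclidean structure given by `‖x‖² = |Δ_K|^{-2/d}·Tr(x·x̄)`, extended coordinatewise
to vectors and matrices over `K_ℝ`. This Euclidean structure is realized through explicit
linear coordinates with values in `EuclideanSpace ℝ _`. -/

namespace Paper

variable (K : Type) [Field K] [NumberField K]

/-- The mixed space `K ⊗ ℝ ≅ ℝ^{r₁} × ℂ^{r₂}`. -/
abbrev MS : Type := NumberField.mixedEmbedding.mixedSpace K

/-- Real-coordinate index type for `K_ℝ`: one coordinate for each real place and two for each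
complex place. -/
abbrev RIx : Type := {w : InfinitePlace K // IsReal w} ⊕ ({w : InfinitePlace K // IsComplex w} × Bool)

/-- The scaling factor `|Δ_K|^{-1/d}`. -/
def sK : ℝ := (Int.natAbs (NumberField.discr K) : ℝ) ^ (-(1:ℝ) / (finrank ℚ K))

lemma sK_pos : 0 < sK K := by
  apply Real.rpow_pos_of_pos
  have := NumberField.discr_ne_zero K
  exact_mod_cast Int.natAbs_pos.mpr this

/-- Coordinates of `K_ℝ` realizing the Euclidean structure `‖x‖² = |Δ_K|^{-2/d}·Tr(x·x̄)`:
a real place `v` contributes the coordinate `|Δ_K|^{-1/d}·x_v` and a complex place `w`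
contributes the two coordinates `|Δ_K|^{-1/d}·√2·Re(x_w)` and `|Δ_K|^{-1/d}·√2·Im(x_w)`,
so that the standard Euclidean norm of the coordinates equals the norm above. -/
def eucMap : MS K ≃ₗ[ℝ] EuclideanSpace ℝ (RIx K) where
  toFun x := WithLp.toLp 2 (fun q => Sum.rec (motive := fun _ => ℝ) (fun v => sK K * x.1 v)
    (fun p => (sK K * Real.sqrt 2) * (if p.2 then (x.2 p.1).im else (x.2 p.1).re)) q)
  invFun y := (fun v => (sK K)⁻¹ * y (.inl v),
               fun w => ⟨(sK K * Real.sqrt 2)⁻¹ * y (.inr (w, false)),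
                         (sK K * Real.sqrt 2)⁻¹ * y (.inr (w, true))⟩)
  map_add' x y := by
    ext q
    rcases q with v | ⟨w, b⟩
    · show sK K * (x.1 v + y.1 v) = sK K * x.1 v + sK K * y.1 v
      ring
    · show (sK K * Real.sqrt 2) * (if b then (x.2 w + y.2 w).im else (x.2 w + y.2 w).re) = _
      cases b <;> simp [Complex.add_re, Complex.add_im] <;> ring
  map_smul' c x := by
    ext q
    rcases q with v | ⟨w, b⟩
    · show sK K * (c * x.1 v) = c * (sK K * x.1 v)
      ring
    · show (sK K * Real.sqrt 2) * (if b then (c • x.2 w).im else (c • x.2 w).re) = _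
      cases b <;> simp [Complex.smul_re, Complex.smul_im] <;> ring
  left_inv x := by
    have h1 : sK K ≠ 0 := ne_of_gt (sK_pos K)
    have h2 : sK K * Real.sqrt 2 ≠ 0 := by
      have h3 : (0:ℝ) < Real.sqrt 2 := Real.sqrt_pos.mpr (by norm_num)
      positivity
    refine Prod.ext (funext fun v => ?_) (funext fun w => ?_)
    · show (sK K)⁻¹ * (sK K * x.1 v) = x.1 v
      field_simp
    · show (⟨(sK K * Real.sqrt 2)⁻¹ * ((sK K * Real.sqrt 2) * (x.2 w).re),
            (sK K * Real.sqrt 2)⁻¹ * ((sK K * Real.sqrt 2) * (x.2 w).im)⟩ : ℂ) = x.2 w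
      apply Complex.ext <;> field_simp
  right_inv y := by
    have h1 : sK K ≠ 0 := ne_of_gt (sK_pos K)
    have h2 : sK K * Real.sqrt 2 ≠ 0 := by
      have h3 : (0:ℝ) < Real.sqrt 2 := Real.sqrt_pos.mpr (by norm_num)
      positivity
    ext q
    rcases q with v | ⟨w, b⟩
    · show sK K * ((sK K)⁻¹ * y (.inl v)) = y (.inl v)
      field_simp
    · cases b
      · show (sK K * Real.sqrt 2) * ((sK K * Real.sqrt 2)⁻¹ * y (.inr (w, false))) = _
        field_simp
      · show (sK K * Real.sqrt 2) * ((sK K * Real.sqrt 2)⁻¹ * y (.inr (w, true))) = _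
        field_simp

/-- Euclidean coordinates for vectors in `K_ℝ^m`. -/
def eucVec (m : ℕ) : (Fin m → MS K) ≃ₗ[ℝ] EuclideanSpace ℝ (Fin m × RIx K) where
  toFun x := WithLp.toLp 2 (fun p => eucMap K (x p.1) p.2)
  invFun y := fun i => (eucMap K).symm (WithLp.toLp 2 (fun q => y (i, q)))
  map_add' x y := by
    ext p
    show eucMap K (x p.1 + y p.1) p.2 = eucMap K (x p.1) p.2 + eucMap K (y p.1) p.2
    rw [map_add]; rfl
  map_smul' c x := by
    ext p
    show eucMap K (c • x p.1) p.2 = c * eucMap K (x p.1) p.2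
    rw [_root_.map_smul]; rfl
  left_inv x := by
    funext i
    show (eucMap K).symm (WithLp.toLp 2 (fun q => eucMap K (x i) q)) = x i
    exact (eucMap K).symm_apply_apply (x i)
  right_inv y := by
    ext p
    show eucMap K ((eucMap K).symm (WithLp.toLp 2 (fun q => y (p.1, q)))) p.2 = y p
    rw [(eucMap K).apply_symm_apply]

/-- Euclidean coordinates for matrices in `M_{n×m}(K_ℝ)`. -/
def eucMat (n m : ℕ) :
    Matrix (Fin n) (Fin m) (MS K) ≃ₗ[ℝ] EuclideanSpace ℝ (Fin n × Fin m × RIx K) where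
  toFun A := WithLp.toLp 2 (fun p => eucMap K (A p.1 p.2.1) p.2.2)
  invFun y := Matrix.of fun i j => (eucMap K).symm (WithLp.toLp 2 (fun q => y (i, j, q)))
  map_add' x y := by
    ext p
    show eucMap K (x p.1 p.2.1 + y p.1 p.2.1) p.2.2 = _
    rw [map_add]; rfl
  map_smul' c x := by
    ext p
    show eucMap K (c • x p.1 p.2.1) p.2.2 = c * eucMap K (x p.1 p.2.1) p.2.2
    rw [_root_.map_smul]; rfl
  left_inv x := by
    funext i j
    show (eucMap K).symm (WithLp.toLp 2 (fun q => eucMap K (x i j) q)) = x i j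
    exact (eucMap K).symm_apply_apply (x i j)
  right_inv y := by
    ext p
    show eucMap K ((eucMap K).symm (WithLp.toLp 2 (fun q => y (p.1, p.2.1, q)))) p.2.2 = y p
    rw [(eucMap K).apply_symm_apply]

/-- The Euclidean norm on `K_ℝ^m` (the `l²`-norm from `‖x‖² = |Δ_K|^{-2/d}·Tr(x·x̄)`,
extended coordinatewise). -/
def vnorm {m : ℕ} (x : Fin m → MS K) : ℝ := ‖eucVec K m x‖

/-- The Euclidean norm on `M_{n×m}(K_ℝ)`. -/
def mnorm {n m : ℕ} (A : Matrix (Fin n) (Fin m) (MS K)) : ℝ := ‖eucMat K n m A‖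

/-- The embedding of `M_{n×m}(O_K)` into `M_{n×m}(K_ℝ)`. -/
def embMat {n m : ℕ} (A : Matrix (Fin n) (Fin m) (𝓞 K)) : Matrix (Fin n) (Fin m) (MS K) :=
  A.map (fun a => NumberField.mixedEmbedding K (algebraMap (𝓞 K) K a))

/-- The rank (over `K`) of a matrix with entries in `O_K`. -/
def rankOK {n m : ℕ} (A : Matrix (Fin n) (Fin m) (𝓞 K)) : ℕ :=
  (A.map (algebraMap (𝓞 K) K)).rank

end Paper

/-!
STATEMENT 4 (rank drop): Let K be a number field of degree d and fix integers n, m ≥ 1 and a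
Euclidean norm ‖·‖ on M_{n×m}(K_ℝ). There exists a constant c > 0, depending on K, the norm,
n, m but independent of k and of the prime ideal P, such that: whenever x ∈ M_{n×m}(O_K) has
rank(x) = k ≥ 1 over K and P is a prime ideal of O_K such that the reduction of x modulo P
has rank strictly less than k over k_P, then ‖x‖ ≥ c·N(P)^{1/(k·d)}.

(A Euclidean norm on the finite-dimensional real vector space `M_{n×m}(K_ℝ)` is the norm
`‖Φ ·‖` for some real linear equivalence `Φ` onto a Euclidean space.)
-/

open Paper NumberField

/-! A matrix of rank `k` over `K` has a nonzero `k × k` minor `δ ∈ 𝓞_K`. If the rank drops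
modulo `P`, then `δ ∈ P`, so `N(P) ≤ |N_{K/ℚ}(δ)| = ∏_w |δ|_w^{m_w}`. By the Leibniz formula and
the equivalence of norms on `M_{n×m}(K_ℝ)`, every `|δ|_w` is at most `n! (C‖x‖)^k`, hence
`N(P) ≤ (n! (C‖x‖)^k)^d`; now take `(kd)`-th roots. -/

namespace Matrix

variable {R F : Type*} {m n : Type*} {k : ℕ}

theorem le_rank_of_det_submatrix_ne_zero [Fintype n] [CommRing R] [IsDomain R] (A : Matrix m n R)
    (r : Fin k → m) (c : Fin k → n) (h : (A.submatrix r c).det ≠ 0) : k ≤ A.rank := by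
  simpa [rank_of_det_ne_zero h] using A.rank_submatrix_le r c

theorem det_submatrix_map {S : Type*} [CommRing R] [CommRing S] (f : R →+* S) (A : Matrix m n R)
    (r : Fin k → m) (c : Fin k → n) : ((A.map f).submatrix r c).det = f (A.submatrix r c).det := by
  rw [RingHom.map_det, RingHom.mapMatrix_apply, submatrix_map]

variable [Field F] [Fintype m] [Fintype n]

theorem exists_linearIndependent_rows (A : Matrix m n F) (hk : A.rank = k) :
    ∃ r : Fin k → m, LinearIndependent F (A.submatrix r id).row := by
  obtain ⟨κ, a, ha, hspan, hli⟩ := exists_linearIndependent' F A.row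
  have : Finite κ := Finite.of_injective a ha
  cases nonempty_fintype κ
  have hcard : Fintype.card κ = k := by
    rw [← hk, rank_eq_finrank_span_row, ← hspan, finrank_span_eq_card hli]
  let e := Fintype.equivFinOfCardEq hcard
  exact ⟨a ∘ e.symm, hli.comp e.symm e.symm.injective⟩

theorem exists_det_submatrix_ne_zero (A : Matrix m n F) (hk : A.rank = k) :
    ∃ (r : Fin k → m) (c : Fin k → n), (A.submatrix r c).det ≠ 0 := by
  obtain ⟨r, hr⟩ := A.exists_linearIndependent_rows hk
  have hrank : (A.submatrix r id)ᵀ.rank = k := by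
    rw [rank_transpose, hr.rank_matrix, Fintype.card_fin]
  obtain ⟨c, hc⟩ := (A.submatrix r id)ᵀ.exists_linearIndependent_rows hrank
  refine ⟨r, c, ?_⟩
  rw [← det_transpose]
  exact ((isUnit_iff_isUnit_det _).mp (linearIndependent_rows_iff_isUnit.mp hc)).ne_zero

end Matrix

theorem LinearEquiv.exists_pos_norm_le_mul_norm {𝕜 E F G : Type*} [NontriviallyNormedField 𝕜]
    [CompleteSpace 𝕜] [AddCommGroup E] [Module 𝕜 E] [NormedAddCommGroup F] [NormedSpace 𝕜 F]
    [FiniteDimensional 𝕜 F] [NormedAddCommGroup G] [NormedSpace 𝕜 G]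
    (Φ : E ≃ₗ[𝕜] F) (ℓ : E →ₗ[𝕜] G) : ∃ C, 0 < C ∧ ∀ a, ‖ℓ a‖ ≤ C * ‖Φ a‖ := by
  obtain ⟨C, hC, h⟩ := (ℓ ∘ₗ Φ.symm.toLinearMap).toContinuousLinearMap.bound
  exact ⟨C, hC, fun a => by simpa using h (Φ a)⟩

theorem LinearEquiv.exists_pos_norm_entry_le {𝕜 E F m n : Type*} [NontriviallyNormedField 𝕜]
    [CompleteSpace 𝕜] [Fintype m] [Fintype n] [NormedAddCommGroup E] [NormedSpace 𝕜 E]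
    [NormedAddCommGroup F] [NormedSpace 𝕜 F] [FiniteDimensional 𝕜 F]
    (Φ : Matrix m n E ≃ₗ[𝕜] F) : ∃ C, 0 < C ∧ ∀ A i j, ‖A i j‖ ≤ C * ‖Φ A‖ := by
  obtain ⟨C, hC, h⟩ := Φ.exists_pos_norm_le_mul_norm (Matrix.ofLinearEquiv 𝕜).symm.toLinearMap
  exact ⟨C, hC, fun A i j => ((norm_le_pi_norm (A i) j).trans (norm_le_pi_norm _ i)).trans (h A)⟩

namespace NumberField

variable {K : Type*} [Field K] [NumberField K]

theorem InfinitePlace.apply_le_norm_mixedEmbedding (w : InfinitePlace K) (a : K) :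
    w a ≤ ‖mixedEmbedding K a‖ := by
  rw [← mixedEmbedding.normAtPlace_apply, mixedEmbedding.norm_eq_sup'_normAtPlace]
  exact Finset.le_sup' (fun w => mixedEmbedding.normAtPlace w (mixedEmbedding K a))
    (Finset.mem_univ w)

theorem InfinitePlace.apply_det_le (w : InfinitePlace K) {k : ℕ} {S : Matrix (Fin k) (Fin k) K}
    {M : ℝ} (h : ∀ i j, ‖mixedEmbedding K (S i j)‖ ≤ M) : w S.det ≤ k.factorial * M ^ k := by
  have := Matrix.det_le (abv := w.1) fun i j => (w.apply_le_norm_mixedEmbedding _).trans (h i j)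
  rwa [Fintype.card_fin, nsmul_eq_mul] at this

theorem abs_norm_le_pow_finrank {x : K} {T : ℝ} (h : ∀ w : InfinitePlace K, w x ≤ T) :
    |(Algebra.norm ℚ x : ℝ)| ≤ T ^ finrank ℚ K := by
  rw [← Rat.cast_abs, ← InfinitePlace.prod_eq_abs_norm, ← InfinitePlace.sum_mult_eq,
    ← Finset.prod_pow_eq_pow_sum]
  exact Finset.prod_le_prod (fun w _ => pow_nonneg (apply_nonneg w _) _)
    fun w _ => pow_le_pow_left₀ (apply_nonneg w _) (h w) _

theorem absNorm_le_pow_finrank_of_mem {I : Ideal (𝓞 K)} {δ : 𝓞 K} (hδI : δ ∈ I) (hδ : δ ≠ 0)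
    {T : ℝ} (h : ∀ w : InfinitePlace K, w δ ≤ T) :
    (Ideal.absNorm I : ℝ) ≤ T ^ finrank ℚ K := by
  have hdvd : (Ideal.absNorm I : ℤ) ∣ |Algebra.norm ℤ δ| :=
    (dvd_abs _ _).mpr (Ideal.absNorm_dvd_norm_of_mem hδI)
  have hle : (Ideal.absNorm I : ℤ) ≤ |Algebra.norm ℤ δ| :=
    Int.le_of_dvd (abs_pos.mpr (Algebra.norm_ne_zero_iff.mpr hδ)) hdvd
  refine le_trans ?_ (abs_norm_le_pow_finrank h)
  rw [← Algebra.coe_norm_int]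
  exact_mod_cast hle

end NumberField

theorem Real.rpow_one_div_le_of_le_pow {N a b : ℝ} {k d : ℕ} (hN : 0 ≤ N) (ha : 1 ≤ a)
    (hb : 0 ≤ b) (hk : 1 ≤ k) (hd : 1 ≤ d) (h : N ≤ (a * b ^ k) ^ d) :
    N ^ (1 / ((k : ℝ) * d)) ≤ a * b := by
  have hk' : (1 : ℝ) ≤ k := by exact_mod_cast hk
  have hd' : (1 : ℝ) ≤ d := by exact_mod_cast hd
  calc N ^ (1 / ((k : ℝ) * d)) ≤ ((a * b ^ k) ^ d) ^ (1 / ((k : ℝ) * d)) := by gcongr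
    _ = a ^ (1 / (k : ℝ)) * b := by
      rw [← Real.rpow_natCast _ d, ← Real.rpow_mul (by positivity), Real.mul_rpow (by positivity)
        (by positivity), ← Real.rpow_natCast b k, ← Real.rpow_mul hb]
      have ha_exp : (d : ℝ) * (1 / (k * d)) = 1 / k := by field_simp
      have hb_exp : (k : ℝ) * (1 / k) = 1 := by field_simp
      rw [ha_exp, hb_exp, Real.rpow_one]
    _ ≤ a * b := by
      gcongr
      exact Real.rpow_le_self_of_one_le ha (by rw [div_le_one (by positivity)]; exact hk')

theorem rank_drop_norm_bound_general (K : Type) [Field K] [NumberField K]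
    (n m : ℕ)
    (Φ : Matrix (Fin n) (Fin m) (MS K) ≃ₗ[ℝ] EuclideanSpace ℝ (Fin n × Fin m × RIx K)) :
    ∃ c : ℝ, 0 < c ∧
      ∀ k : ℕ, 1 ≤ k →
        ∀ P : Ideal (𝓞 K), P.IsPrime → P ≠ ⊥ →
          ∀ x : Matrix (Fin n) (Fin m) (𝓞 K),
            (x.map (algebraMap (𝓞 K) K)).rank = k →
            (x.map (Ideal.Quotient.mk P)).rank < k →
            c * (Nat.card (𝓞 K ⧸ P) : ℝ) ^ ((1 : ℝ) / (k * Module.finrank ℚ K))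
              ≤ ‖Φ (embMat K x)‖ := by
  obtain ⟨C, hC, hentry⟩ := Φ.exists_pos_norm_entry_le
  refine ⟨(n.factorial * C)⁻¹, by positivity, fun k hk P hP _ x hrank hred => ?_⟩
  obtain ⟨r, c, hminor⟩ := (x.map (algebraMap (𝓞 K) K)).exists_det_submatrix_ne_zero hrank
  rw [Matrix.det_submatrix_map] at hminor
  set δ := (x.submatrix r c).det
  have hδP : δ ∈ P := by
    by_contra hδP
    refine hred.not_ge ((x.map (Ideal.Quotient.mk P)).le_rank_of_det_submatrix_ne_zero r c ?_)
    rwa [Matrix.det_submatrix_map, ne_eq, Ideal.Quotient.eq_zero_iff_mem]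
  have hfactorial : k.factorial ≤ n.factorial :=
    Nat.factorial_le (hrank ▸ Matrix.rank_le_height _)
  have hplace : ∀ w : InfinitePlace K, w δ ≤ n.factorial * (C * ‖Φ (embMat K x)‖) ^ k := by
    intro w
    change w (algebraMap (𝓞 K) K δ) ≤ _
    rw [← Matrix.det_submatrix_map]
    refine (w.apply_det_le (S := (x.map (algebraMap (𝓞 K) K)).submatrix r c)
      fun i j => hentry (embMat K x) (r i) (c j)).trans ?_
    gcongr
  have hN := NumberField.absNorm_le_pow_finrank_of_mem hδP (ne_zero_of_map hminor) hplace
  have hroot := Real.rpow_one_div_le_of_le_pow (Nat.cast_nonneg _)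
    (Nat.one_le_cast.mpr n.factorial_pos) (by positivity) hk Module.finrank_pos hN
  rw [← Submodule.cardQuot_apply, ← Ideal.absNorm_apply, inv_mul_le_iff₀ (by positivity),
    mul_assoc]
  exact hroot

theorem rank_drop_norm_bound (K : Type) [Field K] [NumberField K]
    (n m : ℕ) (hn : 1 ≤ n) (hm : 1 ≤ m)
    (Φ : Matrix (Fin n) (Fin m) (MS K) ≃ₗ[ℝ] EuclideanSpace ℝ (Fin n × Fin m × RIx K)) :
    ∃ c : ℝ, 0 < c ∧
      ∀ k : ℕ, 1 ≤ k →
        ∀ P : Ideal (𝓞 K), P.IsPrime → P ≠ ⊥ →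
          ∀ x : Matrix (Fin n) (Fin m) (𝓞 K),
            (x.map (algebraMap (𝓞 K) K)).rank = k →
            (x.map (Ideal.Quotient.mk P)).rank < k →
            c * (Nat.card (𝓞 K ⧸ P) : ℝ) ^ ((1 : ℝ) / (k * Module.finrank ℚ K))
              ≤ ‖Φ (embMat K x)‖ :=
  rank_drop_norm_bound_general K n m Φ
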